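/- arXiv:2507.21658 — 2 statements merged into one kernel-verified Lean document; each statement's English description precedes it below -/
import Mathlib

section
/- Let p > 3 be a prime, let t ∈ {1, 3, p, 3p}, and let r be an integer with 1 ≤ r ≤ 3p − 1 and gcd(r, 3p) = 1. Then Λ(p, r, t) = {1} if r ≡ 2 (mod 3) and |r|_p is odd, and Λ(p, r, t) = ∅ otherwise. -/
/-- `|r|_m`: the multiplicative order of the integer `r` modulo `m`. -/
noncomputable def ordMod (m : ℕ) (r : ℤ) : ℕ := orderOf ((r : ZMod m))

/-- `S_m(x) := 1 + x + ⋯ + x^{m-1}`, with `S_0(x) := 0`. -/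
def Spoly (m : ℕ) (r : ℤ) : ℤ := ∑ i ∈ Finset.range m, r ^ i

/-- `κ(n,r,t) := n·|r|_n / gcd(n, t·S_{|r|_n}(r))`. -/
noncomputable def kappa (n : ℕ) (r t : ℤ) : ℕ :=
  n * ordMod n r / Int.gcd (n : ℤ) (t * Spoly (ordMod n r) r)

/-- `Λ(d,r,t) := {ℓ > 0 : ℓ ∣ |r|_{3p}/gcd(κ(d,r,t),|r|_{3p}) and gcd(r^{ℓκ(d,r,t)} - 1, 3p) = d}`,
for a divisor `d` of `3p`. -/
noncomputable def Lam (p d : ℕ) (r t : ℤ) : Set ℕ :=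
  {ℓ | 0 < ℓ ∧ ℓ ∣ ordMod (3 * p) r / Nat.gcd (kappa d r t) (ordMod (3 * p) r) ∧
    Int.gcd (r ^ (ℓ * kappa d r t) - 1) (3 * (p : ℤ)) = d}

/-- `Δ(m) := {ℓ : 0 < ℓ < m and ℓ ∣ m}`. -/
def Delta (m : ℕ) : Set ℕ := {ℓ | 0 < ℓ ∧ ℓ < m ∧ ℓ ∣ m}

lemma ordMod_dvd_iff (m : ℕ) (r : ℤ) (k : ℕ) :
    ordMod m r ∣ k ↔ (m : ℤ) ∣ r ^ k - 1 := by
  rw [ordMod, orderOf_dvd_iff_pow_eq_one, ← ZMod.intCast_zmod_eq_zero_iff_dvd]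
  push_cast
  rw [sub_eq_zero]

lemma isUnit_of_gcd (m : ℕ) (r : ℤ) (h : IsCoprime r (m : ℤ)) : IsUnit ((r : ZMod m)) := by
  obtain ⟨u, v, huv⟩ := h
  apply IsUnit.of_mul_eq_one ((u : ZMod m))
  have h2 : ((u * r + v * m : ℤ) : ZMod m) = ((1 : ℤ) : ZMod m) := by rw [huv]
  push_cast at h2
  rw [ZMod.natCast_self] at h2
  simp at h2
  rw [mul_comm]
  exact h2

lemma ordMod_pos (m : ℕ) [NeZero m] (r : ℤ) (h : IsCoprime r (m : ℤ)) : 0 < ordMod m r := by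
  obtain ⟨u, hu⟩ := isUnit_of_gcd m r h
  rw [ordMod, ← hu, orderOf_units]
  exact orderOf_pos u

lemma zmod2_iff (r : ℤ) : r ≡ 2 [ZMOD 3] ↔ (r : ZMod 3) = 2 := by
  have h := ZMod.intCast_zmod_eq_zero_iff_dvd (r - 2) 3
  push_cast at h
  rw [sub_eq_zero] at h
  rw [Int.modEq_iff_dvd, dvd_sub_comm, ← h]

lemma gcd_char (p : ℕ) (hp : p.Prime) (hp3 : 3 < p) (x : ℤ) :
    Int.gcd x (3 * (p : ℤ)) = p ↔ (p : ℤ) ∣ x ∧ ¬ (3 : ℤ) ∣ x := by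
  constructor
  · intro h
    refine ⟨?_, ?_⟩
    · have h1 := Int.gcd_dvd_left (a := x) (b := 3 * (p : ℤ))
      rw [h] at h1; exact h1
    · intro h3
      have h3g : (3 : ℤ) ∣ (Int.gcd x (3 * (p : ℤ)) : ℤ) := Int.dvd_coe_gcd h3 ⟨(p : ℤ), rfl⟩
      rw [h] at h3g
      have h3p : (3 : ℕ) ∣ p := by exact_mod_cast h3g
      rcases hp.eq_one_or_self_of_dvd 3 h3p with h | h <;> omega
  · rintro ⟨hpx, h3x⟩
    have hpg : p ∣ Int.gcd x (3 * (p : ℤ)) := by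
      have h1 : (p : ℤ) ∣ (Int.gcd x (3 * (p : ℤ)) : ℤ) := Int.dvd_coe_gcd hpx ⟨3, by ring⟩
      exact_mod_cast h1
    have hg3p : Int.gcd x (3 * (p : ℤ)) ∣ 3 * p := by
      have h1 : (Int.gcd x (3 * (p : ℤ)) : ℤ) ∣ ((3 * p : ℕ) : ℤ) := by
        push_cast; exact Int.gcd_dvd_right _ _
      exact_mod_cast h1
    have h3g : ¬ (3 ∣ Int.gcd x (3 * (p : ℤ))) := by
      intro h
      exact h3x (dvd_trans (by exact_mod_cast h) (Int.gcd_dvd_left x (3 * (p : ℤ))))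
    obtain ⟨k, hk⟩ := hpg
    have hk3 : k ∣ 3 := by
      have h1 : p * k ∣ p * 3 := by rw [← hk, Nat.mul_comm p 3]; exact hg3p
      exact (Nat.mul_dvd_mul_iff_left hp.pos).mp h1
    rcases (Nat.prime_three).eq_one_or_self_of_dvd k hk3 with h1 | h3'
    · simp [hk, h1]
    · exact absurd (by rw [hk, h3']; exact ⟨p, Nat.mul_comm p 3⟩) h3g

lemma kappa_eq_ord (p : ℕ) (hp : p.Prime) (r t : ℤ) (h2 : 2 ≤ ordMod p r) :
    kappa p r t = ordMod p r := by
  have hd : (p : ℤ) ∣ Spoly (ordMod p r) r := by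
    have hgeo : Spoly (ordMod p r) r * (r - 1) = r ^ (ordMod p r) - 1 := geom_sum_mul r _
    have hpd : (p : ℤ) ∣ r ^ (ordMod p r) - 1 := (ordMod_dvd_iff p r _).mp dvd_rfl
    have hpp : Prime ((p : ℕ) : ℤ) := Nat.prime_iff_prime_int.mp hp
    rcases hpp.dvd_mul.mp (hgeo ▸ hpd) with h | h
    · exact h
    · exfalso
      have h1 : ordMod p r ∣ 1 := (ordMod_dvd_iff p r 1).mpr (by simpa using h)
      have := Nat.le_of_dvd one_pos h1
      omega
  rw [kappa, Int.gcd_eq_natAbs_left (hd.mul_left t), Int.natAbs_natCast]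
  exact Nat.mul_div_cancel_left _ hp.pos

lemma kappa_ord_one (p : ℕ) (hp : p.Prime) (hp3 : 3 < p) (r t : ℤ)
    (ht : t = 1 ∨ t = 3 ∨ t = (p : ℤ) ∨ t = 3 * (p : ℤ)) (h1 : ordMod p r = 1) :
    kappa p r t = p ∨ kappa p r t = 1 := by
  have hs : Spoly 1 r = 1 := by simp [Spoly]
  rw [kappa, h1, hs, Nat.mul_one, mul_one]
  rcases ht with h | h | h | h <;> subst h
  · left; simp [Int.gcd]
  · left
    have hco : Nat.gcd p 3 = 1 := (Nat.coprime_primes hp Nat.prime_three).mpr (by omega)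
    have : Int.gcd (p : ℤ) (3 : ℤ) = 1 := by
      have := Int.gcd_natCast_natCast p 3
      simpa [hco] using this
    rw [this]; exact Nat.div_one p
  · right
    rw [Int.gcd_eq_natAbs_left dvd_rfl, Int.natAbs_natCast]
    exact Nat.div_self hp.pos
  · right
    rw [Int.gcd_eq_natAbs_left (a := (p : ℤ)) (b := 3 * (p : ℤ)) ⟨3, by ring⟩, Int.natAbs_natCast]
    exact Nat.div_self hp.pos

/-- Let `p > 3` be prime, `t ∈ {1, 3, p, 3p}`, and `r` an integer with
`1 ≤ r ≤ 3p-1` and `gcd(r,3p) = 1`. Then `Λ(p,r,t) = {1}` if `r ≡ 2 (mod 3)` and `|r|_p`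
is odd, and `Λ(p,r,t) = ∅` otherwise. -/
theorem Lam_p_eq (p : ℕ) (hp : p.Prime) (hp3 : 3 < p) (t : ℤ)
    (ht : t = 1 ∨ t = 3 ∨ t = (p : ℤ) ∨ t = 3 * (p : ℤ)) (r : ℤ)
    (hr1 : 1 ≤ r) (hr2 : r ≤ 3 * (p : ℤ) - 1) (hg : Int.gcd r (3 * (p : ℤ)) = 1) :
    (r ≡ 2 [ZMOD 3] ∧ Odd (ordMod p r) → Lam p p r t = {1}) ∧
    (¬(r ≡ 2 [ZMOD 3] ∧ Odd (ordMod p r)) → Lam p p r t = ∅) := by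
  haveI : NeZero p := ⟨hp.pos.ne'⟩
  haveI : NeZero (3 * p) := ⟨by positivity⟩
  have hcopZ : IsCoprime r ((3 : ℤ) * (p : ℤ)) := Int.isCoprime_iff_gcd_eq_one.mpr hg
  have hcop3 : IsCoprime r ((3 : ℕ) : ℤ) := by
    have := hcopZ.of_isCoprime_of_dvd_right (dvd_mul_right 3 (p : ℤ))
    exact_mod_cast this
  have hcopp : IsCoprime r ((p : ℕ) : ℤ) :=
    hcopZ.of_isCoprime_of_dvd_right (dvd_mul_left (p : ℤ) 3)
  have hcop3p : IsCoprime r (((3 * p : ℕ)) : ℤ) := by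
    have : (((3 * p : ℕ)) : ℤ) = (3 : ℤ) * (p : ℤ) := by push_cast; ring
    rw [this]; exact hcopZ
  have hapos : 0 < ordMod p r := ordMod_pos p r hcopp
  have hcopZ3p : IsCoprime (3 : ℤ) (p : ℤ) := by
    have h1 : Nat.Coprime 3 p := (Nat.coprime_primes Nat.prime_three hp).mpr (by omega)
    exact_mod_cast Nat.isCoprime_iff_coprime.mpr h1
  -- |r|_{3p} = lcm |r|_3 |r|_p
  have hc : ordMod (3 * p) r = Nat.lcm (ordMod 3 r) (ordMod p r) := by
    apply Nat.dvd_antisymm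
    · rw [ordMod_dvd_iff]
      push_cast
      refine hcopZ3p.mul_dvd ?_ ?_
      · exact_mod_cast (ordMod_dvd_iff 3 r _).mp (Nat.dvd_lcm_left _ _)
      · exact_mod_cast (ordMod_dvd_iff p r _).mp (Nat.dvd_lcm_right _ _)
    · have hall : ((3 * p : ℕ) : ℤ) ∣ r ^ (ordMod (3 * p) r) - 1 :=
        (ordMod_dvd_iff _ r _).mp dvd_rfl
      refine Nat.lcm_dvd ?_ ?_
      · rw [ordMod_dvd_iff]
        refine dvd_trans ?_ hall
        exact_mod_cast (⟨p, rfl⟩ : (3 : ℕ) ∣ 3 * p)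
      · rw [ordMod_dvd_iff]
        refine dvd_trans ?_ hall
        exact_mod_cast (⟨3, Nat.mul_comm 3 p⟩ : p ∣ 3 * p)
  -- trichotomy mod 3
  have hr3 : (r : ZMod 3) = 1 ∨ (r : ZMod 3) = 2 := by
    have h0 : (r : ZMod 3) ≠ 0 := by
      intro h
      have hd : ((3 : ℕ) : ℤ) ∣ r := (ZMod.intCast_zmod_eq_zero_iff_dvd r 3).mp h
      obtain ⟨u, v, huv⟩ := hcop3
      have : ((3 : ℕ) : ℤ) ∣ 1 := by
        rw [← huv]
        exact dvd_add (Dvd.dvd.mul_left hd u) (Dvd.dvd.mul_left dvd_rfl v)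
      norm_num at this
    have htri : ∀ x : ZMod 3, x = 0 ∨ x = 1 ∨ x = 2 := by decide
    rcases htri (r : ZMod 3) with h | h | h
    · exact absurd h h0
    · exact Or.inl h
    · exact Or.inr h
  have hb2 : (r : ZMod 3) = 2 → ordMod 3 r = 2 := by
    intro h
    haveI : Fact (Nat.Prime 2) := ⟨Nat.prime_two⟩
    rw [ordMod, h]
    exact orderOf_eq_prime (by decide) (by decide)
  have hb1 : (r : ZMod 3) = 1 → ordMod 3 r = 1 := by
    intro h; rw [ordMod, h, orderOf_one]
  constructor
  · rintro ⟨hmod2, hodd⟩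
    have hb : ordMod 3 r = 2 := hb2 ((zmod2_iff r).mp hmod2)
    obtain ⟨hκodd, hκa, hquot⟩ :
        Odd (kappa p r t) ∧ ordMod p r ∣ kappa p r t ∧
        ordMod (3 * p) r / Nat.gcd (kappa p r t) (ordMod (3 * p) r) = 2 := by
      rcases Nat.lt_or_ge (ordMod p r) 2 with hlt | hge
      · have ha1 : ordMod p r = 1 := by omega
        have hcval : ordMod (3 * p) r = 2 := by rw [hc, hb, ha1]; decide
        rcases kappa_ord_one p hp hp3 r t ht ha1 with hk | hk
        · refine ⟨by rw [hk]; exact hp.odd_of_ne_two (by omega), by rw [ha1]; exact one_dvd _, ?_⟩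
          rw [hk, hcval, (Nat.coprime_primes hp Nat.prime_two).mpr (by omega)]
        · exact ⟨by rw [hk]; exact odd_one, by rw [ha1]; exact one_dvd _, by rw [hk, hcval]; decide⟩
      · have hk := kappa_eq_ord p hp r t hge
        refine ⟨by rw [hk]; exact hodd, by rw [hk], ?_⟩
        rw [hk, hc, hb]
        have hcop2a : Nat.Coprime 2 (ordMod p r) := Nat.coprime_two_left.mpr hodd
        rw [Nat.Coprime.lcm_eq_mul hcop2a, Nat.gcd_eq_left (dvd_mul_left _ 2)]
        rw [Nat.mul_comm]; exact Nat.mul_div_cancel_left 2 hapos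
    ext ℓ
    simp only [Lam, Set.mem_setOf_eq, Set.mem_singleton_iff, hquot]
    constructor
    · rintro ⟨h0, h2, hgcd⟩
      rcases (gcd_char p hp hp3 _).mp hgcd with ⟨hpd, h3d⟩
      rcases (Nat.prime_two).eq_one_or_self_of_dvd ℓ h2 with h | h
      · exact h
      · exfalso
        apply h3d
        have hbd : ordMod 3 r ∣ ℓ * kappa p r t := by
          rw [hb, h]; exact dvd_mul_right 2 _
        have := (ordMod_dvd_iff 3 r _).mp hbd
        exact_mod_cast this
    · intro h; subst h
      refine ⟨one_pos, one_dvd _, (gcd_char p hp hp3 _).mpr ⟨?_, ?_⟩⟩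
      · have h1 : ordMod p r ∣ 1 * kappa p r t := by simpa using hκa
        exact (ordMod_dvd_iff p r _).mp h1
      · intro h3
        have hbd : ordMod 3 r ∣ 1 * kappa p r t :=
          (ordMod_dvd_iff 3 r _).mpr (by exact_mod_cast h3)
        rw [hb, one_mul] at hbd
        rw [Nat.odd_iff] at hκodd
        omega
  · intro hnot
    rcases hr3 with h1 | h2
    · have hb : ordMod 3 r = 1 := hb1 h1
      ext ℓ
      simp only [Lam, Set.mem_setOf_eq, Set.mem_empty_iff_false, iff_false]
      rintro ⟨h0, hdv, hgcd⟩
      rcases (gcd_char p hp hp3 _).mp hgcd with ⟨_, h3d⟩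
      apply h3d
      have hbd : ordMod 3 r ∣ ℓ * kappa p r t := by rw [hb]; exact one_dvd _
      exact_mod_cast (ordMod_dvd_iff 3 r _).mp hbd
    · have hmod2 : r ≡ 2 [ZMOD 3] := (zmod2_iff r).mpr h2
      have heven : Even (ordMod p r) :=
        Nat.not_odd_iff_even.mp (fun h => hnot ⟨hmod2, h⟩)
      have hb : ordMod 3 r = 2 := hb2 h2
      have h2a : 2 ∣ ordMod p r := heven.two_dvd
      have ha2 : 2 ≤ ordMod p r := Nat.le_of_dvd hapos h2a
      have hk := kappa_eq_ord p hp r t ha2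
      have hcval : ordMod (3 * p) r = ordMod p r := by
        rw [hc, hb]
        exact Nat.dvd_antisymm (Nat.lcm_dvd h2a dvd_rfl) (Nat.dvd_lcm_right 2 _)
      ext ℓ
      simp only [Lam, Set.mem_setOf_eq, Set.mem_empty_iff_false, iff_false]
      rintro ⟨h0, hdv, hgcd⟩
      rw [hk, hcval, Nat.gcd_self, Nat.div_self hapos] at hdv
      have hl1 : ℓ = 1 := Nat.dvd_one.mp hdv
      rcases (gcd_char p hp hp3 _).mp hgcd with ⟨_, h3d⟩
      apply h3d
      have hbd : ordMod 3 r ∣ ℓ * kappa p r t := by rw [hb, hl1, one_mul, hk]; exact h2a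
      exact_mod_cast (ordMod_dvd_iff 3 r _).mp hbd
end

section
/- Let p > 3 be a prime, let t ∈ {1, 3, p, 3p}, and let r be an integer with 1 ≤ r ≤ 3p − 1 and gcd(r, 3p) = 1. Then c(V_{3p}, a_{3p,r,t}) equals: gcd(3p, t) if r = 1; 3 + 3(p−1)/|r|_p if r ≠ 1, r ≡ 1 (mod 3) and t ∈ {3, 3p}; 1 + (p−1)/|r|_p if r ≠ 1, r ≡ 1 (mod 3), t ∈ {1, p} and 3 ∤ |r|_p; 1 + 3(p−1)/|r|_p if r ≠ 1, r ≡ 1 (mod 3), t ∈ {1, p} and 3 | |r|_p; 2·gcd(p, t) if r ≡ 2 (mod 3) and r ≡ 1 (mod p); 2 + 2(p−1)/|r|_p if r ≡ 2 (mod 3), r ≢ 1 (mod p) and |r|_p is odd; and 2 + 3(p−1)/|r|_p if r ≡ 2 (mod 3), r ≢ 1 (mod p) and |r|_p is even. -/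
/-- The cycle number of a map `f` on a subset `s`: the number of equivalence classes of
points of `s` under the equivalence relation generated by `x ↦ f x`, i.e. the number of
orbits (cycles) of `f` meeting `s` when `s` is `f`-invariant. -/
noncomputable def cycleCount {Ω : Type*} (f : Ω → Ω) (s : Set Ω) : ℕ :=
  Nat.card (Quot fun a b : s => f (a : Ω) = (b : Ω))

/-- The map `a_{n,r,t}` on the dihedral group `D_{2n}`, sending `u^i ↦ u^{ri}` and
`u^j v ↦ u^{rj+t} v`. (In Mathlib's `DihedralGroup`, with `u := r 1` and `v := sr 0`, one has
`u^j * v = sr (-j)`, so this map is `r i ↦ r (r·i)`, `sr j ↦ sr (r·j - t)`.) -/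
def dihedralAut (n : ℕ) (r t : ℤ) : DihedralGroup n → DihedralGroup n
  | DihedralGroup.r i => DihedralGroup.r ((r : ZMod n) * i)
  | DihedralGroup.sr j => DihedralGroup.sr ((r : ZMod n) * j - (t : ZMod n))

/-- `U_n(d)`: the set of elements of order `d` in the cyclic subgroup `⟨u⟩` of `D_{2n}`. -/
def UnD (n d : ℕ) : Set (DihedralGroup n) :=
  {x | (∃ i, x = DihedralGroup.r i) ∧ orderOf x = d}

/-- `U_n`: the set of nonidentity elements of the cyclic subgroup `⟨u⟩` of `D_{2n}`. -/
def Un (n : ℕ) : Set (DihedralGroup n) :=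
  {x | (∃ i, x = DihedralGroup.r i) ∧ x ≠ 1}

/-- `V_n := {u^j v : 0 ≤ j ≤ n-1}`, the set of reflections of `D_{2n}`. -/
def Vn (n : ℕ) : Set (DihedralGroup n) :=
  {x | ∃ j, x = DihedralGroup.sr j}


noncomputable def oc {α : Type*} (f : α → α) : ℕ :=
  Nat.card (Quot fun a b : α => f a = b)

lemma oc_congr {α β : Type*} (e : α ≃ β) (f : α → α) (g : β → β)
    (h : ∀ a, e (f a) = g (e a)) : oc f = oc g := by
  unfold oc
  refine Nat.card_congr (Quot.congr e fun a b => ?_)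
  constructor
  · rintro rfl; exact (h a).symm
  · intro hb; apply e.injective; rw [h a, hb]

lemma quot_mk_iterate {α : Type*} (f : α → α) (a : α) (n : ℕ) :
    Quot.mk (fun a b : α => f a = b) a = Quot.mk _ (f^[n] a) := by
  induction n with
  | zero => rfl
  | succ n ih =>
      rw [ih, Function.iterate_succ_apply']
      exact Quot.sound rfl

lemma oc_sum {α β : Type*} [Finite α] [Finite β] (f : α → α) (g : β → β) :
    oc (Sum.map f g) = oc f + oc g := by
  unfold oc
  haveI : Finite (Quot fun a b : α => f a = b) := Finite.of_surjective _ Quot.mk_surjective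
  haveI : Finite (Quot fun a b : β => g a = b) := Finite.of_surjective _ Quot.mk_surjective
  rw [← Nat.card_sum]
  refine Nat.card_congr (Equiv.mk
    (Quot.lift (Sum.elim (fun a => Sum.inl (Quot.mk _ a)) (fun b => Sum.inr (Quot.mk _ b))) ?_)
    (Sum.elim (Quot.lift (fun a => Quot.mk _ (Sum.inl a)) ?_)
      (Quot.lift (fun b => Quot.mk _ (Sum.inr b)) ?_)) ?_ ?_)
  · rintro (a|a) (b|b) hab <;> simp only [Sum.map_inl, Sum.map_inr, Sum.inl.injEq,
      Sum.inr.injEq, reduceCtorEq] at hab <;> simp only [Sum.elim_inl, Sum.elim_inr]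
    · exact congrArg Sum.inl (Quot.sound hab)
    · exact congrArg Sum.inr (Quot.sound hab)
  · intro a b hab; exact Quot.sound (by simp [hab])
  · intro a b hab; exact Quot.sound (by simp [hab])
  · intro q; induction q using Quot.ind with
    | _ z => rcases z with a | b <;> rfl
  · rintro (q|q) <;> induction q using Quot.ind <;> rfl

lemma oc_mul_left {G : Type*} [CommGroup G] [Finite G] (g : G) :
    oc (fun x => g * x) = Nat.card G / orderOf g := by
  have key : oc (fun x => g * x) = Nat.card (G ⧸ Subgroup.zpowers g) := by
    unfold oc
    refine Nat.card_congr (Equiv.mk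
      (Quot.lift (fun a => (QuotientGroup.mk a : G ⧸ Subgroup.zpowers g)) ?_)
      (Quotient.lift (fun a => Quot.mk _ a) ?_) ?_ ?_)
    · rintro a b rfl
      refine (QuotientGroup.eq).2 ⟨1, ?_⟩
      show g ^ (1 : ℤ) = a⁻¹ * (g * a)
      rw [zpow_one, mul_comm g a, ← mul_assoc, inv_mul_cancel, one_mul]
    · intro a b hab
      replace hab := QuotientGroup.leftRel_apply.1 hab
      obtain ⟨k, hk⟩ := hab
      have hk' : g ^ k = a⁻¹ * b := hk
      have hb : b = g ^ k * a := by
        rw [hk', mul_comm (a⁻¹ * b) a, mul_inv_cancel_left]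
      have hm : (0:ℤ) < (orderOf g : ℤ) := by exact_mod_cast orderOf_pos g
      set n : ℕ := (k % (orderOf g : ℤ)).toNat with hn
      have hgk : g ^ k = g ^ n := by
        rw [hn, ← zpow_natCast, Int.toNat_of_nonneg (Int.emod_nonneg _ (ne_of_gt hm)),
          zpow_mod_orderOf]
      have : b = (fun x => g * x)^[n] a := by
        rw [hb, hgk, mul_left_iterate]
      rw [this]
      exact (quot_mk_iterate _ a n)
    · intro q; induction q using Quot.ind; rfl
    · intro q; induction q using Quotient.ind; rfl
  rw [key]
  have h1 : Nat.card (Subgroup.zpowers g) * (Subgroup.zpowers g).index = Nat.card G :=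
    Subgroup.card_mul_index _
  rw [Subgroup.index_eq_card] at h1
  rw [← h1, Nat.card_zpowers]
  rw [Nat.mul_div_cancel_left]
  exact (orderOf_pos g)

lemma oc_split {α β γ : Type*} [Finite β] [Finite γ] (f : α → α) (g : β → β) (h : γ → γ)
    (e : α ≃ β ⊕ γ) (hc : ∀ a, e (f a) = Sum.map g h (e a)) : oc f = oc g + oc h :=
  (oc_congr e f (Sum.map g h) hc).trans (oc_sum g h)

lemma oc_subsingleton {α : Type*} [Subsingleton α] [Nonempty α] (f : α → α) : oc f = 1 := by
  unfold oc
  haveI : Subsingleton (Quot fun a b : α => f a = b) :=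
    ⟨fun a b => by
      induction a using Quot.ind; induction b using Quot.ind
      exact congrArg _ (Subsingleton.elim _ _)⟩
  haveI : Nonempty (Quot fun a b : α => f a = b) := Nonempty.map (Quot.mk _) ‹_›
  exact Nat.card_eq_one_iff_unique.2 ⟨‹_›, ‹_›⟩

lemma oc_sub {A : Type*} [AddCommGroup A] [Finite A] (c : A) :
    oc (fun x : A => x - c) = Nat.card A / addOrderOf c := by
  have hcomm : ∀ a : A, (Multiplicative.ofAdd (α := A)) (a - c) =
      Multiplicative.ofAdd (-c) * Multiplicative.ofAdd a := fun a => by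
    rw [← ofAdd_add, neg_add_eq_sub]
  rw [oc_congr (Multiplicative.ofAdd (α := A)) _ _ hcomm, oc_mul_left]
  have h1 : Nat.card (Multiplicative A) = Nat.card A := rfl
  have h2 : orderOf (Multiplicative.ofAdd (-c)) = addOrderOf c := by
    rw [show orderOf (Multiplicative.ofAdd (-c)) = addOrderOf (-c) from rfl, addOrderOf_neg]
  rw [h1, h2]

def vnEquiv (n : ℕ) : (Vn n) ≃ ZMod n where
  toFun x := match x with
    | ⟨DihedralGroup.r i, _⟩ => i
    | ⟨DihedralGroup.sr j, _⟩ => j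
  invFun j := ⟨DihedralGroup.sr j, ⟨j, rfl⟩⟩
  left_inv := by rintro ⟨x, hx⟩; obtain ⟨j, rfl⟩ := hx; rfl
  right_inv j := rfl

lemma cycleCount_eq_oc (n : ℕ) (r t : ℤ) :
    cycleCount (dihedralAut n r t) (Vn n) =
      oc (fun x : ZMod n => (r : ZMod n) * x - (t : ZMod n)) := by
  unfold cycleCount oc
  refine Nat.card_congr (Quot.congr (vnEquiv n) ?_)
  rintro ⟨a, ha⟩ ⟨b, hb⟩
  obtain ⟨j, rfl⟩ := ha
  obtain ⟨j', rfl⟩ := hb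
  show dihedralAut n r t (DihedralGroup.sr j) = DihedralGroup.sr j' ↔ _
  simp [dihedralAut, vnEquiv]

def affSplit {F : Type*} [Field F] [DecidableEq F] (s c : F) (hs : s - 1 ≠ 0) :
    F ≃ Unit ⊕ Fˣ where
  toFun x := if h : x - (s - 1)⁻¹ * c = 0 then Sum.inl () else Sum.inr (Units.mk0 _ h)
  invFun y := Sum.elim (fun _ => (s - 1)⁻¹ * c) (fun u : Fˣ => (s - 1)⁻¹ * c + (u : F)) y
  left_inv x := by
    dsimp only
    split_ifs with h
    · exact (sub_eq_zero.1 h).symm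
    · show (s - 1)⁻¹ * c + (x - (s - 1)⁻¹ * c) = x
      rw [add_comm, sub_add_cancel]
  right_inv y := by
    rcases y with _ | u
    · simp only [Sum.elim_inl]
      exact dif_pos (sub_self _)
    · simp only [Sum.elim_inr]
      have hval : (s - 1)⁻¹ * c + (u : F) - (s - 1)⁻¹ * c = (u : F) :=
        add_sub_cancel_left _ _
      simp only [hval, dif_neg u.ne_zero]
      exact congrArg Sum.inr (Units.ext rfl)

lemma affSplit_comm {F : Type*} [Field F] [DecidableEq F] (s c : F) (hs : s - 1 ≠ 0)
    (hs0 : s ≠ 0) (x : F) :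
    affSplit s c hs (s * x - c) =
      Sum.map id (fun u => Units.mk0 s hs0 * u) (affSplit s c hs x) := by
  have hfix : (s - 1) * ((s - 1)⁻¹ * c) = c := by
    rw [← mul_assoc, mul_inv_cancel₀ hs, one_mul]
  have hkey : s * x - c - (s - 1)⁻¹ * c = s * (x - (s - 1)⁻¹ * c) := by
    linear_combination hfix
  by_cases h : x - (s - 1)⁻¹ * c = 0
  · have h2 : s * x - c - (s - 1)⁻¹ * c = 0 := by rw [hkey, h, mul_zero]
    simp only [affSplit, Equiv.coe_fn_mk, dif_pos h, dif_pos h2, Sum.map_inl, id]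
  · have h2 : s * x - c - (s - 1)⁻¹ * c ≠ 0 := by
      rw [hkey]; exact mul_ne_zero hs0 h
    simp only [affSplit, Equiv.coe_fn_mk, dif_neg h, dif_neg h2, Sum.map_inr]
    refine congrArg Sum.inr (Units.ext ?_)
    simpa using hkey

lemma oc_prod_mul {G H : Type*} [CommGroup G] [CommGroup H] [Finite G] [Finite H]
    (g : G) (h : H) :
    oc (fun y : G × H => (g * y.1, h * y.2)) =
      Nat.card G * Nat.card H / Nat.lcm (orderOf g) (orderOf h) := by
  have h0 : (fun y : G × H => (g * y.1, h * y.2)) = fun y => (g, h) * y := rfl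
  rw [h0, oc_mul_left, Nat.card_prod, Prod.orderOf_mk]

lemma oc_sub_mul {A H : Type*} [AddCommGroup A] [Finite A] [CommGroup H] [Finite H]
    (c : A) (h : H) :
    oc (fun y : A × H => (y.1 - c, h * y.2)) =
      Nat.card A * Nat.card H / Nat.lcm (addOrderOf c) (orderOf h) := by
  have := oc_congr ((Multiplicative.ofAdd (α := A)).prodCongr (Equiv.refl H))
    (fun y : A × H => (y.1 - c, h * y.2))
    (fun y : Multiplicative A × H => (Multiplicative.ofAdd (-c) * y.1, h * y.2))
    (fun a => by
      simp only [Equiv.prodCongr_apply, Equiv.coe_refl, Prod.map]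
      refine congrArg (fun z => (z, h * a.2)) ?_
      rw [← ofAdd_add, neg_add_eq_sub])
  rw [this, oc_prod_mul]
  have h2 : orderOf (Multiplicative.ofAdd (-c)) = addOrderOf c := by
    rw [show orderOf (Multiplicative.ofAdd (-c)) = addOrderOf (-c) from rfl, addOrderOf_neg]
  rw [h2]
  rfl

lemma oc_mul_sub {G A : Type*} [CommGroup G] [Finite G] [AddCommGroup A] [Finite A]
    (g : G) (c : A) :
    oc (fun y : G × A => (g * y.1, y.2 - c)) =
      Nat.card G * Nat.card A / Nat.lcm (orderOf g) (addOrderOf c) := by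
  have := oc_congr ((Equiv.refl G).prodCongr (Multiplicative.ofAdd (α := A)))
    (fun y : G × A => (g * y.1, y.2 - c))
    (fun y : G × Multiplicative A => (g * y.1, Multiplicative.ofAdd (-c) * y.2))
    (fun a => by
      simp only [Equiv.prodCongr_apply, Equiv.coe_refl, Prod.map]
      refine congrArg (fun z => (g * a.1, z)) ?_
      rw [← ofAdd_add, neg_add_eq_sub])
  rw [this, oc_prod_mul]
  have h2 : orderOf (Multiplicative.ofAdd (-c)) = addOrderOf c := by
    rw [show orderOf (Multiplicative.ofAdd (-c)) = addOrderOf (-c) from rfl, addOrderOf_neg]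
  rw [h2]
  rfl

lemma oc_prod_split_right {X Y B : Type*} [Finite X] [Finite Y] [Finite B]
    (fX : X → X) (fY : Y → Y) (fB : B → B) (e : Y ≃ Unit ⊕ B)
    (he : ∀ y, e (fY y) = Sum.map id fB (e y)) :
    oc (fun a : X × Y => (fX a.1, fY a.2)) =
      oc fX + oc (fun a : X × B => (fX a.1, fB a.2)) := by
  refine oc_split _ _ _ (((Equiv.refl X).prodCongr e).trans
    ((Equiv.prodSumDistrib X Unit B).trans ((Equiv.prodPUnit X).sumCongr (Equiv.refl _)))) ?_
  rintro ⟨x, y⟩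
  have h := he y
  rcases hy : e y with _ | b <;> rw [hy] at h <;>
    simp [h, hy, Equiv.prodSumDistrib, Equiv.sumCongr, Equiv.prodPUnit, Sum.map]

lemma oc_prod_split_left {X Y A : Type*} [Finite X] [Finite Y] [Finite A]
    (fX : X → X) (fY : Y → Y) (fA : A → A) (e : X ≃ Unit ⊕ A)
    (he : ∀ x, e (fX x) = Sum.map id fA (e x)) :
    oc (fun a : X × Y => (fX a.1, fY a.2)) =
      oc fY + oc (fun a : A × Y => (fA a.1, fY a.2)) := by
  refine oc_split _ _ _ ((e.prodCongr (Equiv.refl Y)).trans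
    ((Equiv.sumProdDistrib Unit A Y).trans ((Equiv.punitProd Y).sumCongr (Equiv.refl _)))) ?_
  rintro ⟨x, y⟩
  have h := he x
  rcases hx : e x with _ | a <;> rw [hx] at h <;>
    simp [h, hx, Equiv.sumProdDistrib, Equiv.sumCongr, Equiv.punitProd, Sum.map]

lemma oc_affine {F : Type*} [Field F] [Finite F] [DecidableEq F] (s c : F)
    (hs1 : s ≠ 1) (hs0 : s ≠ 0) :
    oc (fun x : F => s * x - c) = 1 + Nat.card Fˣ / orderOf (Units.mk0 s hs0) := by
  rw [oc_split _ (id : Unit → Unit) (fun u => Units.mk0 s hs0 * u)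
    (affSplit s c (sub_ne_zero.2 hs1)) (affSplit_comm s c _ hs0),
    oc_subsingleton, oc_mul_left]

lemma oc_crt (p : ℕ) (hp : p.Prime) (hp3 : 3 < p) (r t : ℤ) :
    oc (fun x : ZMod (3*p) => (r : ZMod (3*p)) * x - (t : ZMod (3*p))) =
      oc (fun y : ZMod 3 × ZMod p =>
        ((r : ZMod 3) * y.1 - (t : ZMod 3), (r : ZMod p) * y.2 - (t : ZMod p))) := by
  have hco : Nat.Coprime 3 p := (Nat.coprime_primes (by norm_num) hp).2 (by omega)
  refine oc_congr (ZMod.chineseRemainder hco).toEquiv _ _ (fun a => ?_)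
  show (ZMod.chineseRemainder hco) _ = _
  rw [map_sub, map_mul, map_intCast, map_intCast]
  set y := (ZMod.chineseRemainder hco) a
  refine Prod.ext ?_ ?_ <;> simp [y]

/-- Let `p > 3` be prime, `t ∈ {1, 3, p, 3p}`, and `r` an integer with
`1 ≤ r ≤ 3p-1` and `gcd(r,3p) = 1`. Then `c(V_{3p}, a_{3p,r,t})` equals: `gcd(3p,t)` if
`r = 1`; `3 + 3(p-1)/|r|_p` if `r ≠ 1`, `r ≡ 1 (mod 3)` and `t ∈ {3,3p}`;
`1 + (p-1)/|r|_p` if `r ≠ 1`, `r ≡ 1 (mod 3)`, `t ∈ {1,p}` and `3 ∤ |r|_p`;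
`1 + 3(p-1)/|r|_p` if `r ≠ 1`, `r ≡ 1 (mod 3)`, `t ∈ {1,p}` and `3 ∣ |r|_p`;
`2·gcd(p,t)` if `r ≡ 2 (mod 3)` and `r ≡ 1 (mod p)`; `2 + 2(p-1)/|r|_p` if `r ≡ 2 (mod 3)`,
`r ≢ 1 (mod p)` and `|r|_p` odd; and `2 + 3(p-1)/|r|_p` if `r ≡ 2 (mod 3)`, `r ≢ 1 (mod p)`
and `|r|_p` even. -/
theorem cycleCount_V3p (p : ℕ) (hp : p.Prime) (hp3 : 3 < p) (t : ℤ)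
    (ht : t = 1 ∨ t = 3 ∨ t = (p : ℤ) ∨ t = 3 * (p : ℤ)) (r : ℤ)
    (hr1 : 1 ≤ r) (hr2 : r ≤ 3 * (p : ℤ) - 1) (hg : Int.gcd r (3 * (p : ℤ)) = 1) :
    (r = 1 →
      cycleCount (dihedralAut (3 * p) r t) (Vn (3 * p)) = Int.gcd (3 * (p : ℤ)) t) ∧
    (r ≠ 1 → r ≡ 1 [ZMOD 3] → (t = 3 ∨ t = 3 * (p : ℤ)) →
      cycleCount (dihedralAut (3 * p) r t) (Vn (3 * p)) = 3 + 3 * (p - 1) / ordMod p r) ∧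
    (r ≠ 1 → r ≡ 1 [ZMOD 3] → (t = 1 ∨ t = (p : ℤ)) → ¬(3 ∣ ordMod p r) →
      cycleCount (dihedralAut (3 * p) r t) (Vn (3 * p)) = 1 + (p - 1) / ordMod p r) ∧
    (r ≠ 1 → r ≡ 1 [ZMOD 3] → (t = 1 ∨ t = (p : ℤ)) → 3 ∣ ordMod p r →
      cycleCount (dihedralAut (3 * p) r t) (Vn (3 * p)) = 1 + 3 * (p - 1) / ordMod p r) ∧
    (r ≡ 2 [ZMOD 3] → r ≡ 1 [ZMOD (p : ℤ)] →
      cycleCount (dihedralAut (3 * p) r t) (Vn (3 * p)) = 2 * Int.gcd (p : ℤ) t) ∧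
    (r ≡ 2 [ZMOD 3] → ¬(r ≡ 1 [ZMOD (p : ℤ)]) → Odd (ordMod p r) →
      cycleCount (dihedralAut (3 * p) r t) (Vn (3 * p)) = 2 + 2 * (p - 1) / ordMod p r) ∧
    (r ≡ 2 [ZMOD 3] → ¬(r ≡ 1 [ZMOD (p : ℤ)]) → Even (ordMod p r) →
      cycleCount (dihedralAut (3 * p) r t) (Vn (3 * p)) = 2 + 3 * (p - 1) / ordMod p r) := by
  haveI : Fact p.Prime := ⟨hp⟩
  have hppos : 0 < p := hp.pos
  haveI : NeZero (3 * p) := ⟨by omega⟩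
  have hco : Nat.Coprime 3 p := (Nat.coprime_primes (by norm_num) hp).2 (by omega)
  have hnd3 : ¬ ((3:ℤ) ∣ r) := by
    intro hdvd
    have h1 : (3:ℤ) ∣ (Int.gcd r (3 * (p:ℤ)) : ℤ) := Int.dvd_coe_gcd hdvd ⟨(p:ℤ), rfl⟩
    rw [hg] at h1
    omega
  have hndp : ¬ (((p:ℕ):ℤ) ∣ r) := by
    intro hdvd
    have h1 : ((p:ℕ):ℤ) ∣ (Int.gcd r (3 * (p:ℤ)) : ℤ) := Int.dvd_coe_gcd hdvd ⟨3, by ring⟩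
    rw [hg] at h1
    have := Int.le_of_dvd (by norm_num) h1
    omega
  have hr3ne0 : (r : ZMod 3) ≠ 0 := by
    rw [Ne, ZMod.intCast_zmod_eq_zero_iff_dvd]
    exact_mod_cast hnd3
  have hrpne0 : (r : ZMod p) ≠ 0 := by
    rw [Ne, ZMod.intCast_zmod_eq_zero_iff_dvd]
    exact hndp
  have hKey : cycleCount (dihedralAut (3 * p) r t) (Vn (3 * p)) =
      oc (fun y : ZMod 3 × ZMod p =>
        ((r : ZMod 3) * y.1 - (t : ZMod 3), (r : ZMod p) * y.2 - (t : ZMod p))) :=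
    (cycleCount_eq_oc (3*p) r t).trans (oc_crt p hp hp3 r t)
  have hord : orderOf (Units.mk0 (r : ZMod p) hrpne0) = ordMod p r := by
    unfold ordMod
    exact (orderOf_units (y := Units.mk0 (r : ZMod p) hrpne0)).symm
  have hdd : ordMod p r ∣ p - 1 := by
    have h1 : orderOf (Units.mk0 (r : ZMod p) hrpne0) ∣ Fintype.card (ZMod p)ˣ :=
      orderOf_dvd_card
    rw [ZMod.card_units p, hord] at h1
    exact h1
  have hdpos : 0 < ordMod p r := by
    rw [← hord]; exact orderOf_pos _
  have hcu : Nat.card (ZMod p)ˣ = p - 1 := by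
    rw [Nat.card_eq_fintype_card, ZMod.card_units]
  have hcu3 : Nat.card (ZMod 3)ˣ = 2 := by
    rw [Nat.card_eq_fintype_card, ZMod.card_units]
  have h2ne0 : (2 : ZMod 3) ≠ 0 := by decide
  have h2m1 : (2 : ZMod 3) - 1 ≠ 0 := by decide
  have h1z : ((1:ℤ) : ZMod 3) ≠ 0 := by decide
  have h3z : ((3:ℤ) : ZMod 3) = 0 := by decide
  have z30 : (3 : ZMod 3) = 0 := by decide
  have hRP1 : r ≠ 1 → r ≡ 1 [ZMOD 3] → (r : ZMod p) ≠ 1 := by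
    intro hne1 hmod3 heq
    have hm3 : (3:ℤ) ∣ 1 - r := Int.ModEq.dvd hmod3
    have hmp : ((p:ℕ):ℤ) ∣ 1 - r :=
      Int.ModEq.dvd ((ZMod.intCast_eq_intCast_iff r 1 p).1 (by simpa using heq))
    have hcop : IsCoprime (3:ℤ) ((p:ℕ):ℤ) := by
      rw [Int.isCoprime_iff_gcd_eq_one]
      rw [show (3:ℤ) = ((3:ℕ):ℤ) from by norm_num, Int.gcd_natCast_natCast]
      exact hco
    obtain ⟨k, hk⟩ := hcop.mul_dvd hm3 hmp
    have hP : (0:ℤ) < 3*(p:ℤ) := by positivity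
    have hk0 : k = 0 := by
      by_contra hkne
      rcases lt_or_gt_of_ne hkne with hneg | hpos
      · have h2 : 3*(p:ℤ)*k ≤ 3*(p:ℤ)*(-1) := mul_le_mul_of_nonneg_left (by omega) hP.le
        rw [← hk] at h2
        nlinarith
      · have h2 : 3*(p:ℤ)*1 ≤ 3*(p:ℤ)*k := mul_le_mul_of_nonneg_left (by omega) hP.le
        rw [← hk] at h2
        nlinarith
    rw [hk0, mul_zero] at hk
    omega
  have hBCD : (r : ZMod 3) = 1 → ∀ hp1 : (r : ZMod p) ≠ 1,
      oc (fun y : ZMod 3 × ZMod p =>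
        ((r : ZMod 3) * y.1 - ((t:ℤ) : ZMod 3), (r : ZMod p) * y.2 - ((t:ℤ) : ZMod p)))
      = 3 / addOrderOf ((t:ℤ) : ZMod 3)
        + 3*(p-1) / Nat.lcm (addOrderOf ((t:ℤ) : ZMod 3)) (ordMod p r) := by
    intro h31 hp1
    have hfun : (fun y : ZMod 3 × ZMod p =>
        ((r : ZMod 3) * y.1 - ((t:ℤ) : ZMod 3), (r : ZMod p) * y.2 - ((t:ℤ) : ZMod p)))
        = fun y : ZMod 3 × ZMod p =>
          (y.1 - ((t:ℤ) : ZMod 3), (r : ZMod p) * y.2 - ((t:ℤ) : ZMod p)) := by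
      funext y; rw [h31, one_mul]
    have h1 : oc (fun y : ZMod 3 × ZMod p =>
          (y.1 - ((t:ℤ) : ZMod 3), (r : ZMod p) * y.2 - ((t:ℤ) : ZMod p)))
        = oc (fun x : ZMod 3 => x - ((t:ℤ) : ZMod 3))
          + oc (fun a : ZMod 3 × (ZMod p)ˣ =>
              (a.1 - ((t:ℤ) : ZMod 3), Units.mk0 (r : ZMod p) hrpne0 * a.2)) :=
      oc_prod_split_right (fun x : ZMod 3 => x - ((t:ℤ) : ZMod 3))
        (fun y : ZMod p => (r : ZMod p) * y - ((t:ℤ) : ZMod p))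
        (fun u => Units.mk0 (r : ZMod p) hrpne0 * u)
        (affSplit (r : ZMod p) ((t:ℤ) : ZMod p) (sub_ne_zero.2 hp1))
        (affSplit_comm (r : ZMod p) ((t:ℤ) : ZMod p) (sub_ne_zero.2 hp1) hrpne0)
    rw [hfun, h1, oc_sub, oc_sub_mul, Nat.card_zmod, hcu, hord]
  have hT3 : (t = 1 ∨ t = (p:ℤ)) → addOrderOf ((t:ℤ) : ZMod 3) = 3 := by
    intro htv
    have hne : ((t:ℤ) : ZMod 3) ≠ 0 := by
      rcases htv with rfl | rfl
      · exact h1z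
      · rw [show (((p:ℤ):ℤ) : ZMod 3) = ((p:ℕ) : ZMod 3) from by push_cast; rfl,
          Ne, ZMod.natCast_eq_zero_iff]
        intro hdvd
        have := (Nat.prime_dvd_prime_iff_eq (by norm_num) hp).1 hdvd
        omega
    have hdvd3 : addOrderOf ((t:ℤ) : ZMod 3) ∣ 3 := by
      have h := addOrderOf_dvd_card (x := ((t:ℤ) : ZMod 3))
      rwa [ZMod.card 3] at h
    rcases (by norm_num : Nat.Prime 3).eq_one_or_self_of_dvd _ hdvd3 with h | h
    · exfalso
      have h0 := addOrderOf_nsmul_eq_zero ((t:ℤ) : ZMod 3)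
      rw [h, one_nsmul] at h0
      exact hne h0
    · exact h
  have hsq : (Units.mk0 (2 : ZMod 3) h2ne0)^2 = 1 := by
    rw [Units.ext_iff, Units.val_pow_eq_pow_val, Units.val_mk0, Units.val_one]; decide
  have hne1u : Units.mk0 (2 : ZMod 3) h2ne0 ≠ 1 := by
    rw [Ne, Units.ext_iff, Units.val_mk0, Units.val_one]; decide
  have hord2 : orderOf (Units.mk0 (2 : ZMod 3) h2ne0) = 2 :=
    orderOf_eq_prime hsq hne1u
  have hlcm2p : Nat.lcm 2 p = 2 * p :=
    ((Nat.coprime_primes (by norm_num) hp).2 (by omega)).lcm_eq_mul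
  have hFGmain : r ≡ 2 [ZMOD 3] → ¬(r ≡ 1 [ZMOD (p : ℤ)]) →
      oc (fun y : ZMod 3 × ZMod p =>
        ((r : ZMod 3) * y.1 - ((t:ℤ) : ZMod 3), (r : ZMod p) * y.2 - ((t:ℤ) : ZMod p)))
      = (1 + (p-1) / ordMod p r)
        + (1 + 2*(p-1) / Nat.lcm 2 (ordMod p r)) := by
    intro hmod32 hmodp
    have h32 : (r : ZMod 3) = 2 := by
      have h := (ZMod.intCast_eq_intCast_iff r 2 3).2 (by exact_mod_cast hmod32)
      simpa using h
    have hp1 : (r : ZMod p) ≠ 1 := by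
      intro heq
      exact hmodp (by exact_mod_cast (ZMod.intCast_eq_intCast_iff r 1 p).1 (by simpa using heq))
    have hfun : (fun y : ZMod 3 × ZMod p =>
        ((r : ZMod 3) * y.1 - ((t:ℤ) : ZMod 3), (r : ZMod p) * y.2 - ((t:ℤ) : ZMod p)))
        = fun y : ZMod 3 × ZMod p =>
          ((2 : ZMod 3) * y.1 - ((t:ℤ) : ZMod 3), (r : ZMod p) * y.2 - ((t:ℤ) : ZMod p)) := by
      funext y; rw [h32]
    have h1 : oc (fun y : ZMod 3 × ZMod p =>
          ((2 : ZMod 3) * y.1 - ((t:ℤ) : ZMod 3), (r : ZMod p) * y.2 - ((t:ℤ) : ZMod p)))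
        = oc (fun y : ZMod p => (r : ZMod p) * y - ((t:ℤ) : ZMod p))
          + oc (fun a : (ZMod 3)ˣ × ZMod p =>
              (Units.mk0 (2 : ZMod 3) h2ne0 * a.1,
                (r : ZMod p) * a.2 - ((t:ℤ) : ZMod p))) :=
      oc_prod_split_left (fun x : ZMod 3 => (2 : ZMod 3) * x - ((t:ℤ) : ZMod 3))
        (fun y : ZMod p => (r : ZMod p) * y - ((t:ℤ) : ZMod p))
        (fun u => Units.mk0 (2 : ZMod 3) h2ne0 * u)
        (affSplit (2 : ZMod 3) ((t:ℤ) : ZMod 3) h2m1)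
        (affSplit_comm (2 : ZMod 3) ((t:ℤ) : ZMod 3) h2m1 h2ne0)
    have h2 : oc (fun y : ZMod p => (r : ZMod p) * y - ((t:ℤ) : ZMod p))
        = 1 + Nat.card (ZMod p)ˣ / orderOf (Units.mk0 (r : ZMod p) hrpne0) :=
      oc_affine (r : ZMod p) ((t:ℤ) : ZMod p) hp1 hrpne0
    have h3 : oc (fun a : (ZMod 3)ˣ × ZMod p =>
          (Units.mk0 (2 : ZMod 3) h2ne0 * a.1,
            (r : ZMod p) * a.2 - ((t:ℤ) : ZMod p)))
        = oc (fun u : (ZMod 3)ˣ => Units.mk0 (2 : ZMod 3) h2ne0 * u)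
          + oc (fun a : (ZMod 3)ˣ × (ZMod p)ˣ =>
              (Units.mk0 (2 : ZMod 3) h2ne0 * a.1,
                Units.mk0 (r : ZMod p) hrpne0 * a.2)) :=
      oc_prod_split_right (fun u : (ZMod 3)ˣ => Units.mk0 (2 : ZMod 3) h2ne0 * u)
        (fun y : ZMod p => (r : ZMod p) * y - ((t:ℤ) : ZMod p))
        (fun u => Units.mk0 (r : ZMod p) hrpne0 * u)
        (affSplit (r : ZMod p) ((t:ℤ) : ZMod p) (sub_ne_zero.2 hp1))
        (affSplit_comm (r : ZMod p) ((t:ℤ) : ZMod p) (sub_ne_zero.2 hp1) hrpne0)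
    rw [hfun, h1, h2, h3, oc_mul_left, oc_prod_mul, hcu, hcu3, hord, hord2]
  refine ⟨?_, ?_, ?_, ?_, ?_, ?_, ?_⟩
  · -- Branch A : r = 1
    rintro rfl
    rw [cycleCount_eq_oc]
    have hfun : (fun x : ZMod (3*p) => ((1:ℤ) : ZMod (3*p)) * x - (t : ZMod (3*p))) =
        fun x : ZMod (3*p) => x - (t : ZMod (3*p)) := by
      funext x; push_cast; ring
    rw [hfun, oc_sub, Nat.card_zmod]
    have hA : ∀ a : ℕ, a ∣ 3*p → 0 < a →
        (3*p) / addOrderOf ((a : ℕ) : ZMod (3*p)) = a := by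
      intro a ha hapos
      rw [ZMod.addOrderOf_coe a (by omega), Nat.gcd_eq_right ha]
      exact Nat.div_div_self ha (by omega)
    rcases ht with rfl | rfl | rfl | rfl
    · have hc : ((1:ℤ) : ZMod (3*p)) = ((1:ℕ) : ZMod (3*p)) := by push_cast; rfl
      rw [hc, hA 1 (one_dvd _) one_pos]
      simp
    · have hc : ((3:ℤ) : ZMod (3*p)) = ((3:ℕ) : ZMod (3*p)) := by push_cast; rfl
      rw [hc, hA 3 ⟨p, rfl⟩ (by norm_num)]
      have : Int.gcd (3*(p:ℤ)) 3 = Nat.gcd (3*p) 3 := by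
        rw [show (3:ℤ)*(p:ℤ) = ((3*p : ℕ) : ℤ) by push_cast; ring,
          show (3:ℤ) = ((3:ℕ):ℤ) by norm_num, Int.gcd_natCast_natCast]
      rw [this, Nat.gcd_eq_right ⟨p, rfl⟩]
    · have hc : (((p : ℤ) : ℤ) : ZMod (3*p)) = ((p:ℕ) : ZMod (3*p)) := by push_cast; rfl
      rw [hc, hA p ⟨3, by ring⟩ hppos]
      have : Int.gcd (3*(p:ℤ)) (p:ℤ) = Nat.gcd (3*p) p := by
        rw [show (3:ℤ)*(p:ℤ) = ((3*p : ℕ) : ℤ) by push_cast; ring, Int.gcd_natCast_natCast]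
      rw [this, Nat.gcd_eq_right ⟨3, by ring⟩]
    · have hc : (((3*(p:ℤ) : ℤ)) : ZMod (3*p)) = ((3*p:ℕ) : ZMod (3*p)) := by push_cast; ring
      rw [hc, hA (3*p) dvd_rfl (by omega)]
      have : Int.gcd (3*(p:ℤ)) (3*(p:ℤ)) = Nat.gcd (3*p) (3*p) := by
        rw [show (3:ℤ)*(p:ℤ) = ((3*p : ℕ) : ℤ) by push_cast; ring, Int.gcd_natCast_natCast]
      rw [this, Nat.gcd_self]
  · -- Branch B
    intro hne1 hmod3 htv
    have h31 : (r : ZMod 3) = 1 := by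
      have h := (ZMod.intCast_eq_intCast_iff r 1 3).2 (by exact_mod_cast hmod3)
      simpa using h
    have hp1 : (r : ZMod p) ≠ 1 := hRP1 hne1 hmod3
    rw [hKey, hBCD h31 hp1]
    have ht30 : ((t : ℤ) : ZMod 3) = 0 := by
      rcases htv with rfl | rfl
      · exact h3z
      · push_cast
        rw [z30, zero_mul]
    rw [ht30, addOrderOf_zero, Nat.lcm_one_left, Nat.div_one]
  · -- Branch C
    intro hne1 hmod3 htv hn3d
    have h31 : (r : ZMod 3) = 1 := by
      have h := (ZMod.intCast_eq_intCast_iff r 1 3).2 (by exact_mod_cast hmod3)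
      simpa using h
    have hp1 : (r : ZMod p) ≠ 1 := hRP1 hne1 hmod3
    rw [hKey, hBCD h31 hp1, hT3 htv]
    have hlcm : Nat.lcm 3 (ordMod p r) = 3 * ordMod p r :=
      (((by norm_num : Nat.Prime 3).coprime_iff_not_dvd).2 hn3d).lcm_eq_mul
    rw [hlcm, Nat.div_self (by norm_num : (0:ℕ) < 3), Nat.mul_div_mul_left _ _ (by norm_num : (0:ℕ) < 3)]
  · -- Branch D
    intro hne1 hmod3 htv h3d
    have h31 : (r : ZMod 3) = 1 := by
      have h := (ZMod.intCast_eq_intCast_iff r 1 3).2 (by exact_mod_cast hmod3)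
      simpa using h
    have hp1 : (r : ZMod p) ≠ 1 := hRP1 hne1 hmod3
    rw [hKey, hBCD h31 hp1, hT3 htv]
    have hlcm : Nat.lcm 3 (ordMod p r) = ordMod p r :=
      Nat.dvd_antisymm (Nat.lcm_dvd h3d dvd_rfl) (Nat.dvd_lcm_right 3 _)
    rw [hlcm, Nat.div_self (by norm_num : (0:ℕ) < 3)]
  · -- Branch E
    intro hmod32 hmodp1
    have h32 : (r : ZMod 3) = 2 := by
      have h := (ZMod.intCast_eq_intCast_iff r 2 3).2 (by exact_mod_cast hmod32)
      simpa using h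
    have hp1' : (r : ZMod p) = 1 := by
      have h := (ZMod.intCast_eq_intCast_iff r 1 p).2 (by exact_mod_cast hmodp1)
      simpa using h
    have hfun : (fun y : ZMod 3 × ZMod p =>
        ((r : ZMod 3) * y.1 - ((t:ℤ) : ZMod 3), (r : ZMod p) * y.2 - ((t:ℤ) : ZMod p)))
        = fun y : ZMod 3 × ZMod p =>
          ((2 : ZMod 3) * y.1 - ((t:ℤ) : ZMod 3), y.2 - ((t:ℤ) : ZMod p)) := by
      funext y; rw [h32, hp1', one_mul]
    have h1 : oc (fun y : ZMod 3 × ZMod p =>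
          ((2 : ZMod 3) * y.1 - ((t:ℤ) : ZMod 3), y.2 - ((t:ℤ) : ZMod p)))
        = oc (fun y : ZMod p => y - ((t:ℤ) : ZMod p))
          + oc (fun a : (ZMod 3)ˣ × ZMod p =>
              (Units.mk0 (2 : ZMod 3) h2ne0 * a.1, a.2 - ((t:ℤ) : ZMod p))) :=
      oc_prod_split_left (fun x : ZMod 3 => (2 : ZMod 3) * x - ((t:ℤ) : ZMod 3))
        (fun y : ZMod p => y - ((t:ℤ) : ZMod p))
        (fun u => Units.mk0 (2 : ZMod 3) h2ne0 * u)
        (affSplit (2 : ZMod 3) ((t:ℤ) : ZMod 3) h2m1)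
        (affSplit_comm (2 : ZMod 3) ((t:ℤ) : ZMod 3) h2m1 h2ne0)
    rw [hKey, hfun, h1, oc_sub, oc_mul_sub, Nat.card_zmod, hcu3, hord2]
    rcases ht with rfl | rfl | rfl | rfl
    · rw [show ((1:ℤ) : ZMod p) = ((1:ℕ) : ZMod p) from by push_cast; rfl,
        ZMod.addOrderOf_coe 1 (by omega), Nat.gcd_one_right, Nat.div_one,
        Nat.div_self hppos, hlcm2p, Nat.div_self (by positivity : 0 < 2*p)]
      simp [Int.gcd]
    · rw [show ((3:ℤ) : ZMod p) = ((3:ℕ) : ZMod p) from by push_cast; rfl,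
        ZMod.addOrderOf_coe 3 (by omega), Nat.Coprime.gcd_eq_one hco.symm, Nat.div_one,
        Nat.div_self hppos, hlcm2p, Nat.div_self (by positivity : 0 < 2*p)]
      have : Int.gcd (p:ℤ) 3 = Nat.gcd p 3 := by
        rw [show (3:ℤ) = ((3:ℕ):ℤ) from by norm_num, Int.gcd_natCast_natCast]
      rw [this, Nat.Coprime.gcd_eq_one hco.symm]
    · rw [show (((p:ℤ):ℤ) : ZMod p) = 0 from by push_cast; simp,
        addOrderOf_zero, Nat.div_one, show Nat.lcm 2 1 = 2 from by decide,
        Nat.mul_div_cancel_left p (by norm_num : (0:ℕ) < 2)]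
      have : Int.gcd (p:ℤ) (p:ℤ) = Nat.gcd p p := Int.gcd_natCast_natCast p p
      rw [this, Nat.gcd_self]
      omega
    · rw [show (((3*(p:ℤ):ℤ)) : ZMod p) = 0 from by push_cast; simp,
        addOrderOf_zero, Nat.div_one, show Nat.lcm 2 1 = 2 from by decide,
        Nat.mul_div_cancel_left p (by norm_num : (0:ℕ) < 2)]
      have : Int.gcd (p:ℤ) (3*(p:ℤ)) = Nat.gcd p (3*p) := by
        rw [show (3:ℤ)*(p:ℤ) = ((3*p : ℕ) : ℤ) from by push_cast; ring, Int.gcd_natCast_natCast]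
      rw [this, Nat.gcd_eq_left ⟨3, by ring⟩]
      omega
  · -- Branch F
    intro hmod32 hmodp hodd
    obtain ⟨m, hm⟩ := hdd
    have hFG := hFGmain hmod32 hmodp
    rw [hKey, hFG]
    have hlcm : Nat.lcm 2 (ordMod p r) = 2 * ordMod p r :=
      ((Nat.prime_two.coprime_iff_not_dvd).2
        (by have := Nat.odd_iff.1 hodd; omega)).lcm_eq_mul
    rw [hlcm, hm]
    have e1 : ordMod p r * m / ordMod p r = m := Nat.mul_div_cancel_left m hdpos
    have e2 : 2 * (ordMod p r * m) / (2 * ordMod p r) = m := by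
      rw [show 2 * (ordMod p r * m) = 2 * ordMod p r * m from by ring,
        Nat.mul_div_cancel_left m (by positivity)]
    have e3 : 2 * (ordMod p r * m) / ordMod p r = 2 * m := by
      rw [show 2 * (ordMod p r * m) = ordMod p r * (2 * m) from by ring,
        Nat.mul_div_cancel_left _ hdpos]
    rw [e1, e2, e3]
    omega
  · -- Branch G
    intro hmod32 hmodp heven
    obtain ⟨m, hm⟩ := hdd
    have hFG := hFGmain hmod32 hmodp
    rw [hKey, hFG]
    have hlcm : Nat.lcm 2 (ordMod p r) = ordMod p r :=
      Nat.dvd_antisymm (Nat.lcm_dvd heven.two_dvd dvd_rfl)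
        (Nat.dvd_lcm_right 2 _)
    rw [hlcm, hm]
    have e1 : ordMod p r * m / ordMod p r = m := Nat.mul_div_cancel_left m hdpos
    have e2 : 2 * (ordMod p r * m) / ordMod p r = 2 * m := by
      rw [show 2 * (ordMod p r * m) = ordMod p r * (2 * m) from by ring,
        Nat.mul_div_cancel_left _ hdpos]
    have e3 : 3 * (ordMod p r * m) / ordMod p r = 3 * m := by
      rw [show 3 * (ordMod p r * m) = ordMod p r * (3 * m) from by ring,
        Nat.mul_div_cancel_left _ hdpos]
    rw [e1, e2, e3]
    omega
end
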